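/- arXiv:2604.02968 — 3 statements merged into one kernel-verified Lean document; each statement's English description precedes it below -/
import Mathlib

section
/- Suppose that (I) for each p = 1,...,p̂ and every δ ∈ ℝ^m for which the sub-SDPR optimal value η^p(δ) is finite, one has η^p(δ) = ζ^p(δ) (the sub-SDPR is exact), and (II) the combined SDPR for the right-hand side γ ∈ ℝ^m admits an optimal solution, i.e., a feasible tuple (X^1,...,X^p̂) attaining the infimum η(γ). Then η(γ) = ζ(γ), i.e., the combined SDPR is exact. -/
/-!
The rank-one lift `u ↦ (u,1)(u,1)ᵀ` gives `η(γ) ≤ ζ(γ)`. Conversely, let `(Xᵖ)` be optimal for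
the combined SDPR and put `δᵖₖ = ⟨Bᵖₖ, Xᵖ⟩`. Each block `Xᵖ` is optimal for sub-SDPRᵖ(δᵖ), since a
strictly better block could be swapped into `(Xᵖ)`; so `ηᵖ(δᵖ)` is finite and, by exactness, equals
`ζᵖ(δᵖ)`. Near-optimal points `uᵖ` of the sub-QCQPᵖ(δᵖ) then form a feasible point of the combined
QCQP, because `Σₚ δᵖ` satisfies the constraints at `γ`, with value arbitrarily close to `η(γ)`.
-/

open Matrix BigOperators

noncomputable section

/-- Trace inner product `⟨A,X⟩ = Σᵢⱼ Aᵢⱼ Xᵢⱼ`. -/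
def mInner {N : ℕ} (A X : Matrix (Fin N) (Fin N) ℝ) : ℝ :=
  ∑ i, ∑ j, A i j * X i j

/-- The quadratic function `u ↦ (u,1)ᵀ B (u,1)` on `ℝⁿ`. -/
def quadF {n : ℕ} (B : Matrix (Fin (n + 1)) (Fin (n + 1)) ℝ) (u : Fin n → ℝ) : ℝ :=
  Fin.snoc u 1 ⬝ᵥ (B *ᵥ Fin.snoc u 1)

/-- A relation on `ℝ` is standard if it is `≤`, `=`, or `≥`. -/
def IsStdRel (r : ℝ → ℝ → Prop) : Prop :=
  r = (· ≤ ·) ∨ r = (· = ·) ∨ r = (· ≥ ·)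

section Combined

variable (phat m : ℕ) (n : Fin phat → ℕ)
  (B : (p : Fin phat) → Fin (m + 1) → Matrix (Fin (n p + 1)) (Fin (n p + 1)) ℝ)
  (rel : Fin m → ℝ → ℝ → Prop)

/-- Feasibility of `u` for the sub-QCQP `p` with right-hand side `δ`. -/
def subQCQPFeas (p : Fin phat) (δ : Fin m → ℝ) (u : Fin (n p) → ℝ) : Prop :=
  ∀ k : Fin m, rel k (quadF (B p k.succ) u) (δ k)

/-- The optimal value `ζᵖ(δ)` of the sub-QCQP `p`. -/
def subQCQPVal (p : Fin phat) (δ : Fin m → ℝ) : EReal :=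
  sInf {y : EReal | ∃ u : Fin (n p) → ℝ,
    subQCQPFeas phat m n B rel p δ u ∧ y = ((quadF (B p 0) u : ℝ) : EReal)}

/-- Feasibility of `X` for the sub-SDPR `p` with right-hand side `δ`. -/
def subSDPRFeas (p : Fin phat) (δ : Fin m → ℝ)
    (X : Matrix (Fin (n p + 1)) (Fin (n p + 1)) ℝ) : Prop :=
  X.PosSemidef ∧ X (Fin.last (n p)) (Fin.last (n p)) = 1 ∧
    ∀ k : Fin m, rel k (mInner (B p k.succ) X) (δ k)

/-- The optimal value `ηᵖ(δ)` of the sub-SDPR `p`. -/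
def subSDPRVal (p : Fin phat) (δ : Fin m → ℝ) : EReal :=
  sInf {y : EReal | ∃ X : Matrix (Fin (n p + 1)) (Fin (n p + 1)) ℝ,
    subSDPRFeas phat m n B rel p δ X ∧ y = ((mInner (B p 0) X : ℝ) : EReal)}

/-- Feasibility for the horizontally connected (combined) QCQP with right-hand side `γ`. -/
def combQCQPFeas (γ : Fin m → ℝ) (u : (p : Fin phat) → Fin (n p) → ℝ) : Prop :=
  ∀ k : Fin m, rel k (∑ p, quadF (B p k.succ) (u p)) (γ k)

/-- The optimal value `ζ(γ)` of the combined QCQP. -/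
def combQCQPVal (γ : Fin m → ℝ) : EReal :=
  sInf {y : EReal | ∃ u : (p : Fin phat) → Fin (n p) → ℝ,
    combQCQPFeas phat m n B rel γ u ∧ y = ((∑ p, quadF (B p 0) (u p) : ℝ) : EReal)}

/-- Feasibility for the combined SDPR with right-hand side `γ`. -/
def combSDPRFeas (γ : Fin m → ℝ)
    (X : (p : Fin phat) → Matrix (Fin (n p + 1)) (Fin (n p + 1)) ℝ) : Prop :=
  (∀ p, (X p).PosSemidef ∧ X p (Fin.last (n p)) (Fin.last (n p)) = 1) ∧
    ∀ k : Fin m, rel k (∑ p, mInner (B p k.succ) (X p)) (γ k)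

/-- The optimal value `η(γ)` of the combined SDPR. -/
def combSDPRVal (γ : Fin m → ℝ) : EReal :=
  sInf {y : EReal | ∃ X : (p : Fin phat) → Matrix (Fin (n p + 1)) (Fin (n p + 1)) ℝ,
    combSDPRFeas phat m n B rel γ X ∧ y = ((∑ p, mInner (B p 0) (X p) : ℝ) : EReal)}

end Combined

lemma mInner_vecMulVec {N : ℕ} (A : Matrix (Fin N) (Fin N) ℝ) (v : Fin N → ℝ) :
    mInner A (vecMulVec v v) = v ⬝ᵥ (A *ᵥ v) := by
  simp only [mInner, vecMulVec_apply, dotProduct, mulVec, Finset.mul_sum]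
  exact Finset.sum_congr rfl fun i _ => Finset.sum_congr rfl fun j _ => by ring

namespace IsStdRel

variable {r : ℝ → ℝ → Prop}

lemma refl (h : IsStdRel r) (a : ℝ) : r a a := by
  rcases h with rfl | rfl | rfl <;> simp

lemma sum_trans (h : IsStdRel r) {ι : Type*} (s : Finset ι) {a b : ι → ℝ} {c : ℝ}
    (hab : ∀ i ∈ s, r (a i) (b i)) (hbc : r (∑ i ∈ s, b i) c) : r (∑ i ∈ s, a i) c := by
  rcases h with rfl | rfl | rfl
  · exact (Finset.sum_le_sum hab).trans hbc
  · rwa [Finset.sum_congr rfl hab]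
  · exact hbc.trans (Finset.sum_le_sum hab)

end IsStdRel

lemma exists_sum_lt_of_forall_exists_lt {ι : Type*} [Fintype ι] {α : ι → Type*}
    (P : ∀ i, α i → Prop) (f : ∀ i, α i → ℝ) (a : ι → ℝ)
    (h : ∀ i, ∀ ε > 0, ∃ x, P i x ∧ f i x < a i + ε) {z : ℝ} (hz : ∑ i, a i < z) :
    ∃ x : ∀ i, α i, (∀ i, P i (x i)) ∧ ∑ i, f i (x i) < z := by
  set ε := (z - ∑ i, a i) / (Fintype.card ι + 1)
  have hε : 0 < ε := div_pos (by linarith) (by positivity)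
  choose x hP hlt using fun i => h i ε hε
  refine ⟨x, hP, ?_⟩
  have hsplit : (Fintype.card ι + 1) * ε = z - ∑ i, a i := mul_div_cancel₀ _ (by positivity)
  calc ∑ i, f i (x i) ≤ ∑ i, (a i + ε) := Finset.sum_le_sum fun i _ => (hlt i).le
    _ = ∑ i, a i + Fintype.card ι * ε := by
      rw [Finset.sum_add_distrib, Finset.sum_const, nsmul_eq_mul, Finset.card_univ]
    _ < z := by linarith

section Relaxation

variable {phat m : ℕ} {n : Fin phat → ℕ}
  {B : (p : Fin phat) → Fin (m + 1) → Matrix (Fin (n p + 1)) (Fin (n p + 1)) ℝ}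
  {rel : Fin m → ℝ → ℝ → Prop}

theorem combSDPRVal_le_combQCQPVal (γ : Fin m → ℝ) :
    combSDPRVal phat m n B rel γ ≤ combQCQPVal phat m n B rel γ := by
  refine sInf_le_sInf ?_
  rintro _ ⟨u, hu, rfl⟩
  refine ⟨fun p => vecMulVec (Fin.snoc (u p) 1) (Fin.snoc (u p) 1), ⟨fun p => ⟨?_, ?_⟩, ?_⟩, ?_⟩
  · simpa using posSemidef_vecMulVec_self_star (Fin.snoc (u p) (1 : ℝ))
  · simp [vecMulVec_apply]
  · exact fun k => by simpa only [mInner_vecMulVec, quadF] using hu k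
  · simp only [mInner_vecMulVec, quadF]

theorem subSDPRVal_eq_of_combSDPR_optimal (hrel : ∀ k, IsStdRel (rel k)) {γ : Fin m → ℝ}
    {X : (p : Fin phat) → Matrix (Fin (n p + 1)) (Fin (n p + 1)) ℝ}
    (hX : combSDPRFeas phat m n B rel γ X)
    (hopt : ((∑ p, mInner (B p 0) (X p) : ℝ) : EReal) = combSDPRVal phat m n B rel γ)
    (p : Fin phat) :
    subSDPRVal phat m n B rel p (fun k => mInner (B p k.succ) (X p)) = mInner (B p 0) (X p) := by
  classical
  refine le_antisymm (sInf_le ⟨X p, ⟨(hX.1 p).1, (hX.1 p).2, fun k => (hrel k).refl _⟩, rfl⟩) ?_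
  refine le_sInf ?_
  rintro _ ⟨X', hX', rfl⟩
  have sum_update (j : Fin (m + 1)) : ∑ q, mInner (B q j) (Function.update X p X' q) =
      mInner (B p j) X' - mInner (B p j) (X p) + ∑ q, mInner (B q j) (X q) := by
    simp only [Function.apply_update (fun q => mInner (B q j)),
      Finset.sum_update_of_mem (Finset.mem_univ p), ← Finset.add_sum_erase _ _ (Finset.mem_univ p),
      Finset.sdiff_singleton_eq_erase]
    ring
  have hfeas : combSDPRFeas phat m n B rel γ (Function.update X p X') := by
    refine ⟨fun q => ?_, fun k => (hrel k).sum_trans _ (fun q _ => ?_) (hX.2 k)⟩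
    · rcases eq_or_ne q p with rfl | hq
      · simpa using And.intro hX'.1 hX'.2.1
      · simpa [hq] using hX.1 q
    · rcases eq_or_ne q p with rfl | hq
      · simpa using hX'.2.2 k
      · simpa [hq] using (hrel k).refl _
  have hle := hopt.trans_le (sInf_le ⟨_, hfeas, rfl⟩)
  rw [EReal.coe_le_coe_iff, sum_update] at hle
  exact EReal.coe_le_coe_iff.mpr (by linarith)

theorem combQCQPVal_le_sum (hrel : ∀ k, IsStdRel (rel k)) {γ : Fin m → ℝ}
    (δ : Fin phat → Fin m → ℝ) (hδ : ∀ k, rel k (∑ p, δ p k) (γ k)) (a : Fin phat → ℝ)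
    (ha : ∀ p, subQCQPVal phat m n B rel p (δ p) ≤ a p) :
    combQCQPVal phat m n B rel γ ≤ ((∑ p, a p : ℝ) : EReal) := by
  refine EReal.le_of_forall_lt_iff_le.mp fun z hz => ?_
  have happrox (p : Fin phat) (ε : ℝ) (hε : 0 < ε) :
      ∃ u, subQCQPFeas phat m n B rel p (δ p) u ∧ quadF (B p 0) u < a p + ε := by
    have hlt : subQCQPVal phat m n B rel p (δ p) < ((a p + ε : ℝ) : EReal) :=
      (ha p).trans_lt (EReal.coe_lt_coe_iff.mpr (by linarith))
    obtain ⟨_, ⟨u, hu, rfl⟩, hlt⟩ := sInf_lt_iff.mp hlt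
    exact ⟨u, hu, EReal.coe_lt_coe_iff.mp hlt⟩
  obtain ⟨u, hu, hlt⟩ := exists_sum_lt_of_forall_exists_lt _ _ a happrox
    (EReal.coe_lt_coe_iff.mp hz)
  have hfeas : combQCQPFeas phat m n B rel γ u :=
    fun k => (hrel k).sum_trans _ (fun p _ => hu p k) (hδ k)
  calc combQCQPVal phat m n B rel γ ≤ ((∑ p, quadF (B p 0) (u p) : ℝ) : EReal) :=
        sInf_le ⟨u, hfeas, rfl⟩
    _ ≤ z := EReal.coe_le_coe_iff.mpr hlt.le

end Relaxation

theorem combined_sdpr_exact_general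
    (phat m : ℕ)
    (n : Fin phat → ℕ)
    (B : (p : Fin phat) → Fin (m + 1) → Matrix (Fin (n p + 1)) (Fin (n p + 1)) ℝ)
    (rel : Fin m → ℝ → ℝ → Prop) (hrel : ∀ k, IsStdRel (rel k))
    (γ : Fin m → ℝ)
    (hI : ∀ (p : Fin phat) (δ : Fin m → ℝ),
      subSDPRVal phat m n B rel p δ ≠ ⊥ → subSDPRVal phat m n B rel p δ ≠ ⊤ →
      subSDPRVal phat m n B rel p δ = subQCQPVal phat m n B rel p δ)
    (hII : ∃ X : (p : Fin phat) → Matrix (Fin (n p + 1)) (Fin (n p + 1)) ℝ,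
      combSDPRFeas phat m n B rel γ X ∧
      ((∑ p, mInner (B p 0) (X p) : ℝ) : EReal) = combSDPRVal phat m n B rel γ) :
    combSDPRVal phat m n B rel γ = combQCQPVal phat m n B rel γ := by
  obtain ⟨X, hX, hopt⟩ := hII
  have hsub := subSDPRVal_eq_of_combSDPR_optimal hrel hX hopt
  have hQCQP (p : Fin phat) :
      subQCQPVal phat m n B rel p (fun k => mInner (B p k.succ) (X p)) = mInner (B p 0) (X p) := by
    rw [← hI p _ (by simp [hsub p]) (by simp [hsub p]), hsub p]
  refine le_antisymm (combSDPRVal_le_combQCQPVal γ) ?_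
  rw [← hopt]
  exact combQCQPVal_le_sum hrel _ hX.2 _ fun p => (hQCQP p).le

/-- **Theorem 1.1.** If (I) every sub-SDPR is exact whenever its optimal value is finite, and
(II) the combined SDPR admits an optimal solution, then the combined SDPR is exact. -/
theorem combined_sdpr_exact
    (phat m : ℕ) (hphat : 0 < phat) (hm : 0 < m)
    (n : Fin phat → ℕ)
    (B : (p : Fin phat) → Fin (m + 1) → Matrix (Fin (n p + 1)) (Fin (n p + 1)) ℝ)
    (hBsymm : ∀ p k, (B p k).IsSymm)
    (hBcorner : ∀ p k, B p k (Fin.last (n p)) (Fin.last (n p)) = 0)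
    (rel : Fin m → ℝ → ℝ → Prop) (hrel : ∀ k, IsStdRel (rel k))
    (γ : Fin m → ℝ)
    (hI : ∀ (p : Fin phat) (δ : Fin m → ℝ),
      subSDPRVal phat m n B rel p δ ≠ ⊥ → subSDPRVal phat m n B rel p δ ≠ ⊤ →
      subSDPRVal phat m n B rel p δ = subQCQPVal phat m n B rel p δ)
    (hII : ∃ X : (p : Fin phat) → Matrix (Fin (n p + 1)) (Fin (n p + 1)) ℝ,
      combSDPRFeas phat m n B rel γ X ∧
      ((∑ p, mInner (B p 0) (X p) : ℝ) : EReal) = combSDPRVal phat m n B rel γ) :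
    combSDPRVal phat m n B rel γ = combQCQPVal phat m n B rel γ :=
  combined_sdpr_exact_general phat m n B rel hrel γ hI hII
end
end

section
/- Let 2 < α < 3. Then the infimum of V₁₁ − W over all symmetric positive semidefinite 2×2 matrices V and reals W ≥ 0 satisfying V₂₂ = 1, V₁₁ − (4+α)V₁₂ + 4α V₂₂ ≤ 0, and −V₁₁ + 5V₁₂ − 6V₂₂ + W ≤ 0 equals (14α − 24)/(α − 1), and (14α − 24)/(α − 1) < 9. Hence this SDP relaxation is not exact, since the corresponding QCQP has optimal value 9. -/
/-!
For every feasible point, the third constraint gives `V₁₁ − W ≥ 5V₁₂ − 6` and, together with the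
second, `(α − 1)V₁₂ ≥ 4α − 6`; hence `V₁₁ − W ≥ 5t − 6 = (14α − 24)/(α − 1)` with
`t = (4α − 6)/(α − 1)`. Both constraints are tight at `V = [[5t − 6, t], [t, 1]]`, `W = 0`, which is
positive semidefinite exactly when `2 ≤ t ≤ 3`, i.e. `2 ≤ α ≤ 3`. Finally `5t − 6 < 9` iff `t < 3`.
-/

open Matrix

def sdprValues (α : ℝ) : Set ℝ :=
  {y : ℝ | ∃ (V : Matrix (Fin 2) (Fin 2) ℝ) (W : ℝ),
    V.PosSemidef ∧ 0 ≤ W ∧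
    V 1 1 = 1 ∧
    V 0 0 - (4 + α) * V 0 1 + 4 * α * V 1 1 ≤ 0 ∧
    -V 0 0 + 5 * V 0 1 - 6 * V 1 1 + W ≤ 0 ∧
    y = V 0 0 - W}

lemma posSemidef_of_sq_le {a b : ℝ} (h : b ^ 2 ≤ a) :
    (!![a, b; b, 1] : Matrix (Fin 2) (Fin 2) ℝ).PosSemidef := by
  have hgram : !![a, b; b, 1] = vecMulVec ![b, 1] (star ![b, 1]) + diagonal ![a - b ^ 2, 0] := by
    ext i j
    fin_cases i <;> fin_cases j <;> simp [vecMulVec, sq]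
  rw [hgram]
  refine (posSemidef_vecMulVec_self_star _).add (PosSemidef.diagonal ?_)
  intro i
  fin_cases i <;> simp [sub_nonneg.mpr h]

lemma sdprValues_lower_bound {α : ℝ} (hα : 1 < α) {y : ℝ} (hy : y ∈ sdprValues α) :
    (14 * α - 24) / (α - 1) ≤ y := by
  obtain ⟨V, W, -, hW, h11, hcut, hrev, rfl⟩ := hy
  rw [h11] at hcut hrev
  have hobj : 5 * V 0 1 - 6 ≤ V 0 0 - W := by linarith
  have hV01 : 4 * α - 6 ≤ (α - 1) * V 0 1 := by linarith
  rw [div_le_iff₀ (by linarith)]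
  nlinarith

lemma sdprValues_mem {α : ℝ} (hα1 : 2 ≤ α) (hα2 : α ≤ 3) :
    (14 * α - 24) / (α - 1) ∈ sdprValues α := by
  have hpos : 0 < α - 1 := by linarith
  set t := (4 * α - 6) / (α - 1) with ht
  have htα : t * (α - 1) = 4 * α - 6 := div_mul_cancel₀ _ hpos.ne'
  have ht2 : 2 ≤ t := by rw [ht, le_div_iff₀ hpos]; linarith
  have ht3 : t ≤ 3 := by rw [ht, div_le_iff₀ hpos]; linarith
  have hval : (14 * α - 24) / (α - 1) = 5 * t - 6 := by
    rw [ht]; field_simp; ring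
  refine ⟨!![5 * t - 6, t; t, 1], 0, posSemidef_of_sq_le (by nlinarith), le_rfl, rfl, ?_, ?_, ?_⟩
  · change 5 * t - 6 - (4 + α) * t + 4 * α * 1 ≤ 0
    linarith
  · change -(5 * t - 6) + 5 * t - 6 * 1 + 0 ≤ 0
    linarith
  · change _ = 5 * t - 6 - 0
    rw [hval, sub_zero]

lemma sdpr_value_lt_nine {α : ℝ} (hα1 : 1 < α) (hα2 : α < 3) :
    (14 * α - 24) / (α - 1) < 9 := by
  rw [div_lt_iff₀ (by linarith)]
  linarith

/-- **Example 5.1 (2 < α < 3, SDPR).** For `2 < α < 3`, the infimum of `V₁₁ − W` over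
positive semidefinite `V ∈ S²₊` and `W ≥ 0` with `V₂₂ = 1`,
`V₁₁ − (4+α)V₁₂ + 4αV₂₂ ≤ 0`, and `−V₁₁ + 5V₁₂ − 6V₂₂ + W ≤ 0` equals
`(14α − 24)/(α − 1) < 9`; hence the SDP relaxation is not exact, the QCQP optimal
value being `9`. -/
theorem example51_sdpr_not_exact (α : ℝ) (hα1 : 2 < α) (hα2 : α < 3) :
    IsGLB {y : ℝ | ∃ (V : Matrix (Fin 2) (Fin 2) ℝ) (W : ℝ),
        V.PosSemidef ∧ 0 ≤ W ∧
        V 1 1 = 1 ∧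
        V 0 0 - (4 + α) * V 0 1 + 4 * α * V 1 1 ≤ 0 ∧
        -V 0 0 + 5 * V 0 1 - 6 * V 1 1 + W ≤ 0 ∧
        y = V 0 0 - W}
      ((14 * α - 24) / (α - 1)) ∧
    (14 * α - 24) / (α - 1) < 9 := by
  change IsGLB (sdprValues α) _ ∧ _
  have hleast : IsLeast (sdprValues α) ((14 * α - 24) / (α - 1)) :=
    ⟨sdprValues_mem hα1.le hα2.le, fun _ hy => sdprValues_lower_bound (by linarith) hy⟩
  exact ⟨hleast.isGLB, sdpr_value_lt_nine (by linarith) hα2⟩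
end

section
/- Let α = 2. Then the infimum of v₁² − w² over (v₁, v₂, w) ∈ ℝ³ with v₂² = 1, (v₁ − 2v₂)(v₁ − 4v₂) ≤ 0, and −(v₁ − 2v₂)(v₁ − 3v₂) + w² ≤ 0 equals 4, and the infimum of V₁₁ − W over symmetric positive semidefinite 2×2 matrices V and reals W ≥ 0 with V₂₂ = 1, V₁₁ − 6V₁₂ + 8V₂₂ ≤ 0, and −V₁₁ + 5V₁₂ − 6V₂₂ + W ≤ 0 also equals 4. Hence the SDP relaxation is exact at α = 2. -/
open Matrix

/-!
The SDP lower bound is a two-line certificate. Adding the two inequality constraints to the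
objective gives `V₁₁ - W ≥ 5 V₁₂ - 6`, and combining the first constraint with the
`2 × 2` minor inequality `V₁₂² ≤ V₁₁ V₂₂ = V₁₁` gives `V₁₂² - 6 V₁₂ + 8 ≤ 0`, i.e.
`2 ≤ V₁₂ ≤ 4`; hence `V₁₁ - W ≥ 4`. The QCQP is bounded below by the same number because
`(v v^T, w²)` is SDP-feasible whenever `(v, w)` is QCQP-feasible, with the same objective value.
Both bounds are attained at `v = (2, 1)`, `w = 0`.
-/

theorem Matrix.PosSemidef.sq_apply_le_mul_apply {n : Type*} {V : Matrix n n ℝ}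
    (hV : V.PosSemidef) (i j : n) : V i j ^ 2 ≤ V i i * V j j := by
  have hdet := (hV.submatrix ![i, j]).det_nonneg
  have hsym : V j i = V i j := hV.1.apply i j
  rw [det_fin_two] at hdet
  simp only [submatrix_apply, Matrix.cons_val_zero, Matrix.cons_val_one] at hdet
  rw [hsym, ← sq] at hdet
  linarith

abbrev qcqpValues : Set ℝ :=
  {y | ∃ v₁ v₂ w : ℝ,
    v₂ ^ 2 = 1 ∧
    (v₁ - 2 * v₂) * (v₁ - 4 * v₂) ≤ 0 ∧
    -((v₁ - 2 * v₂) * (v₁ - 3 * v₂)) + w ^ 2 ≤ 0 ∧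
    y = v₁ ^ 2 - w ^ 2}

abbrev sdpValues : Set ℝ :=
  {y | ∃ (V : Matrix (Fin 2) (Fin 2) ℝ) (W : ℝ),
    V.PosSemidef ∧ 0 ≤ W ∧
    V 1 1 = 1 ∧
    V 0 0 - 6 * V 0 1 + 8 * V 1 1 ≤ 0 ∧
    -V 0 0 + 5 * V 0 1 - 6 * V 1 1 + W ≤ 0 ∧
    y = V 0 0 - W}

lemma four_le_of_mem_sdpValues {y : ℝ} (hy : y ∈ sdpValues) : 4 ≤ y := by
  obtain ⟨V, W, hV, -, h11, hle₁, hle₂, rfl⟩ := hy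
  have hminor : V 0 1 ^ 2 ≤ V 0 0 := by simpa [h11] using hV.sq_apply_le_mul_apply 0 1
  have h01 : 2 ≤ V 0 1 := by nlinarith
  linarith

lemma lift_mem_sdpValues {y : ℝ} (hy : y ∈ qcqpValues) : y ∈ sdpValues := by
  obtain ⟨v₁, v₂, w, hv₂, hle₁, hle₂, rfl⟩ := hy
  refine ⟨vecMulVec ![v₁, v₂] ![v₁, v₂], w ^ 2, ?_, sq_nonneg w, ?_⟩
  · simpa using posSemidef_vecMulVec_self_star ![v₁, v₂]
  · simp only [vecMulVec_apply, Matrix.cons_val_zero, Matrix.cons_val_one]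
    refine ⟨by linarith, by linarith, by linarith, by ring⟩

lemma four_mem_qcqpValues : (4 : ℝ) ∈ qcqpValues := ⟨2, 1, 0, by norm_num⟩

/-- **Example 5.1 (α = 2).** At `α = 2`, the QCQP infimum of `v₁² − w²` subject to
`v₂² = 1`, `(v₁ − 2v₂)(v₁ − 4v₂) ≤ 0`, `−(v₁ − 2v₂)(v₁ − 3v₂) + w² ≤ 0` equals `4`,
and the SDP relaxation infimum of `V₁₁ − W` subject to `V ⪰ 0`, `W ≥ 0`, `V₂₂ = 1`,
`V₁₁ − 6V₁₂ + 8V₂₂ ≤ 0`, `−V₁₁ + 5V₁₂ − 6V₂₂ + W ≤ 0` also equals `4`; hence the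
SDP relaxation is exact at `α = 2`. -/
theorem example51_alpha_two_exact :
    IsGLB {y : ℝ | ∃ v₁ v₂ w : ℝ,
        v₂ ^ 2 = 1 ∧
        (v₁ - 2 * v₂) * (v₁ - 4 * v₂) ≤ 0 ∧
        -((v₁ - 2 * v₂) * (v₁ - 3 * v₂)) + w ^ 2 ≤ 0 ∧
        y = v₁ ^ 2 - w ^ 2} 4 ∧
    IsGLB {y : ℝ | ∃ (V : Matrix (Fin 2) (Fin 2) ℝ) (W : ℝ),
        V.PosSemidef ∧ 0 ≤ W ∧
        V 1 1 = 1 ∧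
        V 0 0 - 6 * V 0 1 + 8 * V 1 1 ≤ 0 ∧
        -V 0 0 + 5 * V 0 1 - 6 * V 1 1 + W ≤ 0 ∧
        y = V 0 0 - W} 4 := by
  exact ⟨IsLeast.isGLB ⟨four_mem_qcqpValues,
      fun _ hy ↦ four_le_of_mem_sdpValues (lift_mem_sdpValues hy)⟩,
    IsLeast.isGLB ⟨lift_mem_sdpValues four_mem_qcqpValues, fun _ ↦ four_le_of_mem_sdpValues⟩⟩
end
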